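/- arXiv:2501.00472 — 4 statements merged into one kernel-verified Lean document; each statement's English description precedes it below -/
import Mathlib

section
/- Let L ≥ 1 be an integer and N an even integer with 2 ≤ N ≤ L+1. Then for every subset D of {0,1,...,L} with |D| = N, the spatial variance satisfies χ(D) ≤ χ(K_N^L), i.e., the clustered array K_N^L maximizes the spatial variance among all N-element subsets of {0,1,...,L}. -/
/-- Spatial mean of a finite set of integer sensor positions. -/
noncomputable def spatialMean (D : Finset ℤ) : ℝ :=
  (∑ d ∈ D, (d : ℝ)) / D.card

/-- Spatial variance of a finite set of integer sensor positions. -/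
noncomputable def spatialVar (D : Finset ℤ) : ℝ :=
  (∑ d ∈ D, ((d : ℝ) - spatialMean D) ^ 2) / D.card

/-- The `N`-sensor uniform linear array `U_N = {0, 1, ..., N-1}` as a set of integers. -/
noncomputable def ULA (N : ℕ) : Finset ℤ := Finset.Ico (0 : ℤ) (N : ℤ)

/-- The clustered array `K_N^L = U_{N/2} ∪ (L - U_{N/2})`. -/
noncomputable def clusteredArray (N L : ℕ) : Finset ℤ :=
  ULA (N / 2) ∪ (ULA (N / 2)).image (fun u => (L : ℤ) - u)

/-! Since the sum of squared deviations is smallest about the mean,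
`χ(D) ≤ (1/N) ∑_{d ∈ D} (d - L/2)²`, with equality for `K = K_N^L` because `K` is symmetric
about `L/2`. With `N = 2n`, every point of `K` is at distance at least `(L+1)/2 - n` from `L/2`,
and every other point of `{0, …, L}` at distance at most that; as `D \ K` and `K \ D` have the
same size, trading one for the other can only increase `∑ (d - L/2)²`. -/

open Finset

theorem Finset.sum_le_sum_of_card_eq_of_sdiff {ι M : Type*} [AddCommMonoid M] [Preorder M]
    [AddLeftMono M] [DecidableEq ι] {s t : Finset ι} {f : ι → M} (m : M) (hcard : #s = #t)
    (hs : ∀ i ∈ s \ t, f i ≤ m) (ht : ∀ i ∈ t \ s, m ≤ f i) :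
    ∑ i ∈ s, f i ≤ ∑ i ∈ t, f i :=
  calc ∑ i ∈ s, f i = ∑ i ∈ s ∩ t, f i + ∑ i ∈ s \ t, f i := (sum_inter_add_sum_sdiff s t f).symm
    _ ≤ ∑ i ∈ s ∩ t, f i + #(s \ t) • m := by gcongr; exact sum_le_card_nsmul _ _ _ hs
    _ = ∑ i ∈ t ∩ s, f i + #(t \ s) • m := by rw [inter_comm, card_sdiff_comm hcard]
    _ ≤ ∑ i ∈ t ∩ s, f i + ∑ i ∈ t \ s, f i := by gcongr; exact card_nsmul_le_sum _ _ _ ht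
    _ = ∑ i ∈ t, f i := sum_inter_add_sum_sdiff t s f

section SpatialVariance

variable (D : Finset ℤ)

theorem sum_sub_spatialMean_eq_zero : ∑ d ∈ D, ((d : ℝ) - spatialMean D) = 0 := by
  rcases D.eq_empty_or_nonempty with rfl | hD
  · simp
  rw [sum_sub_distrib, sum_const, nsmul_eq_mul, spatialMean,
    mul_div_cancel₀ _ (by exact_mod_cast hD.card_ne_zero), sub_self]

theorem sum_sq_sub_spatialMean_le (c : ℝ) :
    ∑ d ∈ D, ((d : ℝ) - spatialMean D) ^ 2 ≤ ∑ d ∈ D, ((d : ℝ) - c) ^ 2 := by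
  set μ := spatialMean D
  have hsplit : ∑ d ∈ D, ((d : ℝ) - c) ^ 2 = ∑ d ∈ D, ((d : ℝ) - μ) ^ 2
      + 2 * (μ - c) * ∑ d ∈ D, ((d : ℝ) - μ) + #D * (μ - c) ^ 2 := by
    rw [mul_sum, ← sum_add_distrib, ← nsmul_eq_mul, ← sum_const, ← sum_add_distrib]
    exact sum_congr rfl fun d _ => by ring
  rw [hsplit, sum_sub_spatialMean_eq_zero]
  nlinarith [sq_nonneg (μ - c), (#D).cast_nonneg (α := ℝ)]

theorem spatialVar_le_sum_sq_sub_div_card (c : ℝ) :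
    spatialVar D ≤ (∑ d ∈ D, ((d : ℝ) - c) ^ 2) / #D :=
  div_le_div_of_nonneg_right (sum_sq_sub_spatialMean_le D c) (Nat.cast_nonneg _)

theorem spatialVar_eq_of_sum_sub_eq_zero {c : ℝ} (h : ∑ d ∈ D, ((d : ℝ) - c) = 0) :
    spatialVar D = (∑ d ∈ D, ((d : ℝ) - c) ^ 2) / #D := by
  rcases D.eq_empty_or_nonempty with rfl | hD
  · simp [spatialVar]
  have hcard : (#D : ℝ) ≠ 0 := by exact_mod_cast hD.card_ne_zero
  have hμ : spatialMean D = c := by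
    rw [sum_sub_distrib, sum_const, nsmul_eq_mul, sub_eq_zero] at h
    rw [spatialMean, h, mul_div_cancel_left₀ _ hcard]
  rw [spatialVar, hμ]

theorem sum_sub_half_eq_zero_of_sub_mem {c : ℤ} (h : ∀ d ∈ D, c - d ∈ D) :
    ∑ d ∈ D, ((d : ℝ) - c / 2) = 0 :=
  sum_involution (fun d _ => c - d) (fun d _ => by push_cast; ring)
    (fun d _ hd hfix => hd (by
      have : (d : ℝ) = c - d := by exact_mod_cast hfix.symm
      linarith))
    h (fun d _ => sub_sub_cancel c d)

end SpatialVariance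

section ClusteredArray

variable {n L : ℕ} {k : ℤ}

theorem mem_clusteredArray :
    k ∈ clusteredArray (n + n) L ↔ 0 ≤ k ∧ k < n ∨ L - n < k ∧ k ≤ L := by
  have hn : (n + n) / 2 = n := by omega
  simp only [clusteredArray, ULA, hn, mem_union, mem_Ico, mem_image]
  constructor
  · rintro (hk | ⟨u, hu, rfl⟩) <;> omega
  · rintro (hk | hk)
    · exact .inl hk
    · exact .inr ⟨L - k, by omega, by ring⟩

theorem sub_mem_clusteredArray (hk : k ∈ clusteredArray (n + n) L) :
    (L : ℤ) - k ∈ clusteredArray (n + n) L := by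
  rw [mem_clusteredArray] at hk ⊢
  omega

theorem sum_sub_half_clusteredArray : ∑ k ∈ clusteredArray (n + n) L, ((k : ℝ) - L / 2) = 0 := by
  simpa using sum_sub_half_eq_zero_of_sub_mem (c := L) _ fun _ => sub_mem_clusteredArray

theorem card_clusteredArray (h : n + n ≤ L + 1) : #(clusteredArray (n + n) L) = n + n := by
  have hK : clusteredArray (n + n) L = Ico 0 (n : ℤ) ∪ Ioc ((L : ℤ) - n) L := by
    ext k
    simp only [mem_clusteredArray, mem_union, mem_Ico, mem_Ioc]
  rw [hK, card_union_of_disjoint, Int.card_Ico, Int.card_Ioc]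
  · omega
  · exact disjoint_left.2 fun k hk hk' => by simp only [mem_Ico, mem_Ioc] at hk hk'; omega

theorem sq_sub_half_le_of_mem_sdiff_clusteredArray
    (hk : k ∈ ULA (L + 1) \ clusteredArray (n + n) L) :
    ((k : ℝ) - L / 2) ^ 2 ≤ (((L : ℝ) + 1) / 2 - n) ^ 2 := by
  rw [mem_sdiff, mem_clusteredArray, ULA, mem_Ico] at hk
  have hlo : (n : ℝ) ≤ k := by exact_mod_cast (by omega : (n : ℤ) ≤ k)
  have hhi : (k : ℝ) ≤ L - n := by exact_mod_cast (by omega : k ≤ (L : ℤ) - n)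
  exact sq_le_sq' (by linarith) (by linarith)

theorem sq_le_sq_sub_half_of_mem_clusteredArray (h : n + n ≤ L + 1)
    (hk : k ∈ clusteredArray (n + n) L) :
    (((L : ℝ) + 1) / 2 - n) ^ 2 ≤ ((k : ℝ) - L / 2) ^ 2 := by
  have hnL : (n : ℝ) + n ≤ L + 1 := by exact_mod_cast h
  rw [mem_clusteredArray] at hk
  rcases hk with ⟨-, hk⟩ | ⟨hk, -⟩
  · have hk' : (k : ℝ) + 1 ≤ n := by exact_mod_cast (by omega : k + 1 ≤ n)
    nlinarith
  · have hk' : (L : ℝ) - n + 1 ≤ k := by exact_mod_cast (by omega : (L : ℤ) - n + 1 ≤ k)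
    nlinarith

end ClusteredArray

theorem clustered_array_maximizes_spatial_variance_general
    (L N : ℕ) (hNeven : Even N) (hNL : N ≤ L + 1)
    (D : Finset ℤ) (hD : D ⊆ ULA (L + 1)) (hcard : D.card = N) :
    spatialVar D ≤ spatialVar (clusteredArray N L) := by
  obtain ⟨n, rfl⟩ := hNeven
  have hKcard := card_clusteredArray hNL
  rw [spatialVar_eq_of_sum_sub_eq_zero _ sum_sub_half_clusteredArray, hKcard]
  refine (spatialVar_le_sum_sq_sub_div_card D (L / 2)).trans ?_
  rw [hcard]
  gcongr ?_ / _
  exact sum_le_sum_of_card_eq_of_sdiff _ (hcard.trans hKcard.symm)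
    (fun d hd => sq_sub_half_le_of_mem_sdiff_clusteredArray (sdiff_subset_sdiff hD le_rfl hd))
    (fun k hk => sq_le_sq_sub_half_of_mem_clusteredArray hNL (mem_sdiff.1 hk).1)

/-- The clustered array maximizes the spatial variance among all
`N`-element subsets of `{0, 1, ..., L}`. -/
theorem clustered_array_maximizes_spatial_variance
    (L N : ℕ) (hL : 1 ≤ L) (hNeven : Even N) (hN2 : 2 ≤ N) (hNL : N ≤ L + 1)
    (D : Finset ℤ) (hD : D ⊆ ULA (L + 1)) (hcard : D.card = N) :
    spatialVar D ≤ spatialVar (clusteredArray N L) :=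
  clustered_array_maximizes_spatial_variance_general L N hNeven hNL D hD hcard
end

section
/- Let L ≥ 1 be an integer and N an even integer with 2 ≤ N ≤ L+1. Then for every finite set D ⊂ ℤ with |D| = N whose physical aperture satisfies max D − min D ≤ L, one has χ(D) ≤ χ(K_N^L); that is, under a constraint on the physical aperture and the number of sensors, no array geometry has larger spatial variance than the clustered array. -/
/-!
Sort `D` as `d₀ < ⋯ < d_{N-1}` and put `a = min D`. Since the `dᵢ` are distinct integers in
`[a, a + L]`, we get `a + i ≤ dᵢ ≤ a + L - (N - 1 - i)`, so `dᵢ` is no farther from `a + L / 2`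
than the `i`-th smallest element of `K_N^L` is from `L / 2`. The variance of `D` is at most its
second moment about `a + L / 2`, while `K_N^L` is symmetric about `L / 2`, so its variance is
exactly its second moment about `L / 2`.
-/

open Finset

lemma StrictMono.val_sub_val_le_sub {n : ℕ} {f : Fin n → ℤ} (hf : StrictMono f) {i j : Fin n}
    (hij : i ≤ j) : (j : ℤ) - i ≤ f j - f i := by
  have hcard := card_le_card_of_injOn (s := Icc i j) (t := Icc (f i) (f j)) f
    (fun k hk => by
      simp only [coe_Icc, Set.mem_Icc] at hk ⊢; exact ⟨hf.monotone hk.1, hf.monotone hk.2⟩)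
    hf.injective.injOn
  rw [Fin.card_Icc, Int.card_Icc] at hcard
  omega

section OrderEmbOfFin

variable {D : Finset ℤ} {N : ℕ} (hcard : D.card = N) (hne : D.Nonempty) (i : Fin N)

lemma min'_add_le_orderEmbOfFin : D.min' hne + i ≤ D.orderEmbOfFin hcard i := by
  have hgap := (D.orderEmbOfFin hcard).strictMono.val_sub_val_le_sub
    (show (⟨0, i.pos⟩ : Fin N) ≤ i from Fin.le_iff_val_le_val.mpr (Nat.zero_le _))
  have hmin := D.min'_le _ (D.orderEmbOfFin_mem hcard ⟨0, i.pos⟩)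
  simp only at hgap
  omega

lemma orderEmbOfFin_add_le_max' : D.orderEmbOfFin hcard i + (N - 1 - i : ℕ) ≤ D.max' hne := by
  have hgap := (D.orderEmbOfFin hcard).strictMono.val_sub_val_le_sub
    (show i ≤ ⟨N - 1, Nat.sub_one_lt_of_lt i.isLt⟩ from
      Fin.le_iff_val_le_val.mpr (Nat.le_sub_one_of_lt i.isLt))
  have hmax := D.le_max' _ (D.orderEmbOfFin_mem hcard ⟨N - 1, Nat.sub_one_lt_of_lt i.isLt⟩)
  simp only at hgap
  omega

end OrderEmbOfFin

lemma sum_sq_sub_eq_sum_sq_sub_spatialMean_add (D : Finset ℤ) (hne : D.Nonempty) (c : ℝ) :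
    ∑ d ∈ D, ((d : ℝ) - c) ^ 2
      = ∑ d ∈ D, ((d : ℝ) - spatialMean D) ^ 2 + #D * (spatialMean D - c) ^ 2 := by
  have hcentered : ∑ d ∈ D, ((d : ℝ) - spatialMean D) = 0 := by
    rw [sum_sub_distrib, sum_const, nsmul_eq_mul, spatialMean,
      mul_div_cancel₀ _ (by exact_mod_cast hne.card_pos.ne'), sub_self]
  set μ := spatialMean D
  calc ∑ d ∈ D, ((d : ℝ) - c) ^ 2
      = ∑ d ∈ D, (((d : ℝ) - μ) ^ 2 + 2 * (μ - c) * ((d : ℝ) - μ) + (μ - c) ^ 2) :=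
        sum_congr rfl fun d _ => by ring
    _ = _ := by rw [sum_add_distrib, sum_add_distrib, ← mul_sum, hcentered, sum_const,
        nsmul_eq_mul]; ring

lemma spatialVar_le_sum_sq_sub_div (D : Finset ℤ) (c : ℝ) :
    spatialVar D ≤ (∑ d ∈ D, ((d : ℝ) - c) ^ 2) / #D := by
  rcases D.eq_empty_or_nonempty with rfl | hne
  · simp [spatialVar]
  rw [spatialVar, sum_sq_sub_eq_sum_sq_sub_spatialMean_add D hne c]
  gcongr
  exact le_add_of_nonneg_right (by positivity)

lemma spatialMean_eq_of_image_sub_self {D : Finset ℤ} (hne : D.Nonempty) {s : ℤ}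
    (hsymm : D.image (s - ·) = D) : spatialMean D = s / 2 := by
  have hreflect : ∑ d ∈ D, (d : ℝ) = ∑ d ∈ D, ((s : ℝ) - d) := by
    conv_lhs => rw [← hsymm]
    rw [sum_image fun x _ y _ h => by simpa using h]
    push_cast; rfl
  rw [sum_sub_distrib, sum_const, nsmul_eq_mul] at hreflect
  rw [spatialMean]
  field_simp [hne.card_pos.ne']
  linarith

lemma spatialVar_eq_of_image_sub_self {D : Finset ℤ} {s : ℤ} (hsymm : D.image (s - ·) = D) :
    spatialVar D = (∑ d ∈ D, ((d : ℝ) - s / 2) ^ 2) / #D := by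
  rcases D.eq_empty_or_nonempty with rfl | hne
  · simp [spatialVar]
  rw [spatialVar, spatialMean_eq_of_image_sub_self hne hsymm]

/-- The `i`-th smallest element of `K_N^L` (for `i < N`, `N` even). -/
def clusteredArrayElem (N L i : ℕ) : ℤ :=
  if i < N / 2 then i else L - (N - 1 - i : ℕ)

lemma clusteredArray_eq_image {N : ℕ} (L : ℕ) (hN : Even N) :
    clusteredArray N L = (range N).image (clusteredArrayElem N L) := by
  obtain ⟨m, rfl⟩ := hN
  ext x
  simp only [clusteredArray, ULA, clusteredArrayElem, mem_union, mem_image, mem_Ico, mem_range]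
  constructor
  · rintro (⟨h0, hm⟩ | ⟨u, ⟨h0, hm⟩, rfl⟩)
    · exact ⟨x.toNat, by omega, by split_ifs <;> omega⟩
    · exact ⟨m + m - 1 - u.toNat, by omega, by split_ifs <;> omega⟩
  · rintro ⟨i, hi, rfl⟩
    split_ifs with h
    · left; omega
    · right; exact ⟨(m + m - 1 - i : ℕ), by omega, by omega⟩

lemma clusteredArrayElem_injOn {N L : ℕ} (hNL : N ≤ L + 1) :
    Set.InjOn (clusteredArrayElem N L) (range N) := by
  intro i hi j hj h
  simp only [coe_range, Set.mem_Iio, clusteredArrayElem] at hi hj h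
  split_ifs at h <;> omega

lemma image_sub_clusteredArray (N L : ℕ) :
    (clusteredArray N L).image ((L : ℤ) - ·) = clusteredArray N L := by
  have hinv : Function.Involutive ((L : ℤ) - ·) := sub_sub_cancel _
  rw [clusteredArray, image_union, image_image, hinv.comp_self, image_id, union_comm]

lemma spatialVar_clusteredArray {N L : ℕ} (hN : Even N) (hNL : N ≤ L + 1) :
    spatialVar (clusteredArray N L)
      = (∑ i ∈ range N, ((clusteredArrayElem N L i : ℝ) - L / 2) ^ 2) / N := by
  rw [spatialVar_eq_of_image_sub_self (image_sub_clusteredArray N L),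
    clusteredArray_eq_image L hN, sum_image (clusteredArrayElem_injOn hNL),
    card_image_of_injOn (clusteredArrayElem_injOn hNL), card_range]
  push_cast; rfl

lemma sq_sub_le_sq_clusteredArrayElem {N L i : ℕ} {a x : ℤ} (hlow : a + i ≤ x)
    (hhigh : x + (N - 1 - i : ℕ) ≤ a + L) :
    ((x : ℝ) - (a + L / 2)) ^ 2 ≤ ((clusteredArrayElem N L i : ℝ) - L / 2) ^ 2 := by
  rify at hlow hhigh
  unfold clusteredArrayElem
  split_ifs with hi
  · have hmirror : (i : ℝ) ≤ (N - 1 - i : ℕ) := by exact_mod_cast (by omega : i ≤ N - 1 - i)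
    rw [Int.cast_natCast, sub_sq_comm (i : ℝ)]
    apply sq_le_sq' <;> linarith
  · have hmirror : ((N - 1 - i : ℕ) : ℝ) ≤ i := by exact_mod_cast (by omega : N - 1 - i ≤ i)
    push_cast
    apply sq_le_sq' <;> linarith

theorem clustered_array_optimal_under_aperture_constraint_general
    (L N : ℕ) (hNeven : Even N) (hNL : N ≤ L + 1)
    (D : Finset ℤ) (hcard : D.card = N) (hne : D.Nonempty)
    (haperture : D.max' hne - D.min' hne ≤ (L : ℤ)) :
    spatialVar D ≤ spatialVar (clusteredArray N L) := by
  set c : ℝ := D.min' hne + L / 2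
  calc spatialVar D ≤ (∑ d ∈ D, ((d : ℝ) - c) ^ 2) / N := hcard ▸ spatialVar_le_sum_sq_sub_div D c
    _ = (∑ i : Fin N, ((D.orderEmbOfFin hcard i : ℝ) - c) ^ 2) / N := by
      conv_lhs => rw [← D.map_orderEmbOfFin_univ hcard]
      rw [sum_map]
      rfl
    _ ≤ (∑ i : Fin N, ((clusteredArrayElem N L i : ℝ) - L / 2) ^ 2) / N := by
      refine div_le_div_of_nonneg_right (sum_le_sum fun i _ => ?_) N.cast_nonneg
      have hhigh := orderEmbOfFin_add_le_max' hcard hne i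
      refine sq_sub_le_sq_clusteredArrayElem (min'_add_le_orderEmbOfFin hcard hne i) ?_
      omega
    _ = spatialVar (clusteredArray N L) := by
      rw [Fin.sum_univ_eq_sum_range (fun i => ((clusteredArrayElem N L i : ℝ) - L / 2) ^ 2),
        spatialVar_clusteredArray hNeven hNL]

/-- Under an aperture constraint `max D − min D ≤ L` and sensor-number
constraint `|D| = N`, no array has larger spatial variance than the clustered array. -/
theorem clustered_array_optimal_under_aperture_constraint
    (L N : ℕ) (hL : 1 ≤ L) (hNeven : Even N) (hN2 : 2 ≤ N) (hNL : N ≤ L + 1)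
    (D : Finset ℤ) (hcard : D.card = N) (hne : D.Nonempty)
    (haperture : D.max' hne - D.min' hne ≤ (L : ℤ)) :
    spatialVar D ≤ spatialVar (clusteredArray N L) :=
  clustered_array_optimal_under_aperture_constraint_general L N hNeven hNL D hcard hne haperture
end

section
/- Let N_t ≥ 1 be an integer, N_r ≥ 2 an even integer, and set L = (N_t + 1)·N_r/2 − 1. Let D_t = (N_r/2)·U_{N_t} be the transmit array and D_r = K_{N_r}^L the clustered receive array. Then the sum co-array D_Σ = D_t + D_r is contiguous: D_Σ = U_{N_t·N_r} = {0, 1, ..., N_t·N_r − 1}. -/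
/-!
Write `M = N_r/2`. The reflected cluster `L - U_M` is the window `N_t·M + U_M`, so `D_r` consists
of two windows of `M` consecutive integers. By division with remainder by `M`, the dilated array
`M·U_{N_t}` plus a window of `M` consecutive integers starting at `x` is the window of `N_t·M`
consecutive integers starting at `x`; the two resulting windows `U_{N_t·M}` and `N_t·M + U_{N_t·M}`
are adjacent and together form `U_{N_t·N_r}`.
-/

open scoped Pointwise

open Finset

lemma ULA_image_const_sub (n : ℕ) (c : ℤ) :
    (ULA n).image (fun u => c - u) = Ico (c + 1 - n) (c + 1) := by
  ext d
  simp only [ULA, mem_image, mem_Ico]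
  constructor
  · rintro ⟨u, ⟨hu₀, hu₁⟩, rfl⟩
    omega
  · intro hd
    exact ⟨c - d, by omega, by ring⟩

lemma image_mul_ULA_add_Ico (a b : ℕ) (x : ℤ) :
    (ULA a).image ((b : ℤ) * ·) + Ico x (x + b) = Ico x (x + a * b) := by
  ext d
  simp only [ULA, mem_add, mem_image, mem_Ico]
  constructor
  · rintro ⟨_, ⟨m, ⟨hm₀, hm₁⟩, rfl⟩, y, ⟨hy₀, hy₁⟩, rfl⟩
    have : (b : ℤ) * (m + 1) ≤ b * a := by gcongr; omega
    constructor <;> nlinarith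
  · rintro ⟨hd₀, hd₁⟩
    have hb : (0 : ℤ) < b := by
      by_contra! hb
      nlinarith [show (0 : ℤ) ≤ a by positivity]
    have hq₀ : 0 ≤ (d - x) / b := Int.ediv_nonneg (by omega) hb.le
    have hqa : (d - x) / b < a := Int.ediv_lt_of_lt_mul hb (by linarith)
    have hr₀ : 0 ≤ (d - x) % b := Int.emod_nonneg _ hb.ne'
    have hrb : (d - x) % b < b := Int.emod_lt_of_pos _ hb
    refine ⟨_, ⟨(d - x) / b, ⟨hq₀, hqa⟩, rfl⟩, x + (d - x) % b, ⟨by omega, by omega⟩, ?_⟩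
    linarith [Int.mul_ediv_add_emod (d - x) b]

lemma image_mul_ULA_add_ULA (a b : ℕ) :
    (ULA a).image ((b : ℤ) * ·) + ULA b = ULA (a * b) := by
  simpa [ULA] using image_mul_ULA_add_Ico a b 0

theorem sum_coarray_contiguous_general
    (Nt Nr : ℕ) (hNr : 2 ≤ Nr) (hNrEven : Even Nr)
    (L : ℕ) (hL : L = (Nt + 1) * Nr / 2 - 1) :
    (ULA Nt).image (fun m => ((Nr : ℤ) / 2) * m) + clusteredArray Nr L
      = ULA (Nt * Nr) := by
  obtain ⟨M, rfl⟩ := hNrEven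
  have hM : (M + M) / 2 = M := by omega
  have hMℤ : ((M + M : ℕ) : ℤ) / 2 = M := by omega
  have hL' : (L : ℤ) + 1 = Nt * M + M := by
    have hdiv : (Nt + 1) * (M + M) / 2 = (Nt + 1) * M := by
      rw [← two_mul, mul_left_comm, Nat.mul_div_cancel_left _ two_pos]
    -- `M ≥ 1`, so the natural subtraction in `hL` does not truncate
    have hpos : 1 ≤ (Nt + 1) * M := Nat.mul_pos (Nat.succ_pos _) (by omega)
    rw [hL, hdiv]
    push_cast [hpos]
    ring
  rw [clusteredArray, hM, hMℤ, ULA_image_const_sub, hL', add_sub_cancel_right, add_union,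
    image_mul_ULA_add_ULA, image_mul_ULA_add_Ico, ULA, ULA]
  push_cast
  rw [Ico_union_Ico_eq_Ico (by positivity) (le_add_of_nonneg_right (by positivity)), mul_add]

/-- With `L = (N_t + 1)·N_r/2 − 1`, the sum co-array of the
dilated-ULA transmit array and the clustered receive array is contiguous:
`D_t + D_r = U_{N_t·N_r}`. -/
theorem sum_coarray_contiguous
    (Nt Nr : ℕ) (hNt : 1 ≤ Nt) (hNr : 2 ≤ Nr) (hNrEven : Even Nr)
    (L : ℕ) (hL : L = (Nt + 1) * Nr / 2 - 1) :
    (ULA Nt).image (fun m => ((Nr : ℤ) / 2) * m) + clusteredArray Nr L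
      = ULA (Nt * Nr) :=
  sum_coarray_contiguous_general Nt Nr hNr hNrEven L hL
end

section
/- Let N ≥ 1 be an integer, d : Fin N → ℤ an injective map with image D, and ω ∈ ℝ. Define a, ȧ ∈ ℂ^N (with the standard Hermitian inner product) by a_k = exp(i·d_k·ω) and ȧ_k = i·d_k·exp(i·d_k·ω) (the steering vector of the array D and its derivative with respect to ω). Then the squared norm of the component of ȧ orthogonal to a satisfies ‖ȧ − (⟨a, ȧ⟩/‖a‖²)·a‖² = ∑_{k} d_k² − (1/N)·(∑_{k} d_k)² = N·χ(D); that is, the Fisher-information quantity governing the single-target CRB equals the number of sensors times the spatial variance of the array. -/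
/-!
Write `ȧ = c ⊙ a` with `c k = i d_k`. Since every entry of `a` has modulus one, `‖a‖² = N`,
`⟪a, ȧ⟫ = ∑ c k = i ∑ d_k` and `‖ȧ‖² = ∑ d_k²`, so Pythagoras for the projection onto `a`
gives `∑ d_k² - (∑ d_k)² / N`, which is `N` times the variance of the `d_k`. Injectivity of `d`
makes the variance of the family that of its image `D`.
-/

open scoped InnerProductSpace

theorem norm_sub_inner_div_norm_sq_smul_sq {𝕜 E : Type*} [RCLike 𝕜] [NormedAddCommGroup E]
    [InnerProductSpace 𝕜 E] (x y : E) :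
    ‖y - (⟪x, y⟫_𝕜 / ((‖x‖ : 𝕜) ^ 2)) • x‖ ^ 2 = ‖y‖ ^ 2 - ‖⟪x, y⟫_𝕜‖ ^ 2 / ‖x‖ ^ 2 := by
  rcases eq_or_ne x 0 with rfl | hx
  · simp
  have hre : RCLike.re ⟪y, (⟪x, y⟫_𝕜 / ((‖x‖ : 𝕜) ^ 2)) • x⟫_𝕜 = ‖⟪x, y⟫_𝕜‖ ^ 2 / ‖x‖ ^ 2 := by
    rw [inner_smul_right, ← inner_conj_symm x y, div_mul_eq_mul_div, RCLike.conj_mul,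
      RCLike.norm_conj, ← RCLike.ofReal_pow, ← RCLike.ofReal_pow, ← RCLike.ofReal_div,
      RCLike.ofReal_re]
  have hnorm : ‖(⟪x, y⟫_𝕜 / ((‖x‖ : 𝕜) ^ 2)) • x‖ ^ 2 = ‖⟪x, y⟫_𝕜‖ ^ 2 / ‖x‖ ^ 2 := by
    rw [norm_smul, norm_div, norm_pow, RCLike.norm_ofReal, abs_norm]
    field_simp
  rw [@norm_sub_sq 𝕜, hre, hnorm]
  ring

namespace EuclideanSpace

variable {ι : Type*} [Fintype ι] {a b : EuclideanSpace ℂ ι} {c : ι → ℂ}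

theorem norm_sq_eq_card_of_forall_norm_eq_one (ha : ∀ k, ‖a k‖ = 1) :
    ‖a‖ ^ 2 = Fintype.card ι := by
  simp [EuclideanSpace.norm_sq_eq, ha]

theorem inner_eq_sum_of_forall_norm_eq_one (ha : ∀ k, ‖a k‖ = 1) (hb : ∀ k, b k = c k * a k) :
    ⟪a, b⟫_ℂ = ∑ k, c k := by
  simp only [PiLp.inner_apply, RCLike.inner_apply, hb]
  refine Finset.sum_congr rfl fun k _ => ?_
  rw [mul_assoc, Complex.mul_conj', ha, Complex.ofReal_one, one_pow, mul_one]

theorem norm_sq_eq_sum_of_forall_norm_eq_one (ha : ∀ k, ‖a k‖ = 1) (hb : ∀ k, b k = c k * a k) :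
    ‖b‖ ^ 2 = ∑ k, ‖c k‖ ^ 2 := by
  simp [EuclideanSpace.norm_sq_eq, hb, ha]

theorem norm_sub_proj_sq_of_forall_norm_eq_one (ha : ∀ k, ‖a k‖ = 1)
    (hb : ∀ k, b k = c k * a k) :
    ‖b - (⟪a, b⟫_ℂ / ((‖a‖ : ℂ) ^ 2)) • a‖ ^ 2
      = ∑ k, ‖c k‖ ^ 2 - ‖∑ k, c k‖ ^ 2 / Fintype.card ι := by
  refine (norm_sub_inner_div_norm_sq_smul_sq (𝕜 := ℂ) a b).trans ?_
  rw [norm_sq_eq_sum_of_forall_norm_eq_one ha hb,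
    inner_eq_sum_of_forall_norm_eq_one ha hb, norm_sq_eq_card_of_forall_norm_eq_one ha]

end EuclideanSpace

theorem Finset.sum_sq_sub_sq_sum_div_card {ι : Type*} (s : Finset ι) (x : ι → ℝ) :
    ∑ i ∈ s, x i ^ 2 - (∑ i ∈ s, x i) ^ 2 / s.card
      = ∑ i ∈ s, (x i - (∑ j ∈ s, x j) / s.card) ^ 2 := by
  rcases s.eq_empty_or_nonempty with rfl | hs
  · simp
  have : (s.card : ℝ) ≠ 0 := by simp [hs.ne_empty]
  simp only [sub_sq, Finset.sum_add_distrib, Finset.sum_sub_distrib, ← Finset.sum_mul,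
    ← Finset.mul_sum, Finset.sum_const, nsmul_eq_mul]
  field_simp
  ring

theorem card_mul_spatialVar_image {ι : Type*} [Fintype ι] {d : ι → ℤ}
    (hd : Function.Injective d) :
    Fintype.card ι * spatialVar (Finset.univ.image d)
      = ∑ k, (d k : ℝ) ^ 2 - (∑ k, (d k : ℝ)) ^ 2 / Fintype.card ι := by
  rw [← Finset.card_univ, Finset.sum_sq_sub_sq_sum_div_card]
  simp only [spatialVar, spatialMean, Finset.card_image_of_injective _ hd,
    Finset.sum_image fun _ _ _ _ h => hd h]
  rcases isEmpty_or_nonempty ι with _ | _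
  · simp
  · exact mul_div_cancel₀ _ (by simp)

theorem steering_vector_fisher_information_general
    (N : ℕ) (d : Fin N → ℤ) (hd : Function.Injective d) (ω : ℝ)
    (a adot : EuclideanSpace ℂ (Fin N))
    (ha : ∀ k, a k = Complex.exp (Complex.I * (d k : ℂ) * (ω : ℂ)))
    (hadot : ∀ k, adot k = Complex.I * (d k : ℂ) * Complex.exp (Complex.I * (d k : ℂ) * (ω : ℂ))) :
    ‖adot - (⟪a, adot⟫_ℂ / ((‖a‖ : ℂ) ^ 2)) • a‖ ^ 2
        = (∑ k, ((d k : ℝ)) ^ 2) - (1 / (N : ℝ)) * (∑ k, ((d k : ℝ))) ^ 2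
      ∧ (∑ k, ((d k : ℝ)) ^ 2) - (1 / (N : ℝ)) * (∑ k, ((d k : ℝ))) ^ 2
        = (N : ℝ) * spatialVar (Finset.univ.image d) := by
  have ha_norm : ∀ k, ‖a k‖ = 1 := fun k => by
    rw [ha, ← Complex.norm_exp_ofReal_mul_I (d k * ω)]
    push_cast
    ring_nf
  have hadot_mul : ∀ k, adot k = (Complex.I * (d k : ℂ)) * a k := fun k => by rw [hadot, ha]
  have hsum : ‖∑ k, Complex.I * (d k : ℂ)‖ ^ 2 = (∑ k, (d k : ℝ)) ^ 2 := by
    rw [← Finset.mul_sum, norm_mul, Complex.norm_I, one_mul, ← Int.cast_sum, Complex.norm_intCast,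
      sq_abs, Int.cast_sum]
  have hvar := card_mul_spatialVar_image hd
  rw [Fintype.card_fin] at hvar
  refine ⟨?_, by rw [hvar]; ring⟩
  rw [EuclideanSpace.norm_sub_proj_sq_of_forall_norm_eq_one ha_norm hadot_mul, hsum,
    Fintype.card_fin]
  simp only [norm_mul, Complex.norm_I, one_mul, Complex.norm_intCast, sq_abs]
  ring

/-- For the steering vector `a` of an `N`-sensor array with injective
sensor positions `d` and its derivative `ȧ` with respect to the angle `ω`, the squared
norm of the component of `ȧ` orthogonal to `a` equals
`∑ d_k² − (1/N)(∑ d_k)² = N·χ(D)`: the Fisher-information quantity governing the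
single-target CRB is the number of sensors times the spatial variance of the array. -/
theorem steering_vector_fisher_information
    (N : ℕ) (hN : 1 ≤ N) (d : Fin N → ℤ) (hd : Function.Injective d) (ω : ℝ)
    (a adot : EuclideanSpace ℂ (Fin N))
    (ha : ∀ k, a k = Complex.exp (Complex.I * (d k : ℂ) * (ω : ℂ)))
    (hadot : ∀ k, adot k = Complex.I * (d k : ℂ) * Complex.exp (Complex.I * (d k : ℂ) * (ω : ℂ))) :
    ‖adot - (⟪a, adot⟫_ℂ / ((‖a‖ : ℂ) ^ 2)) • a‖ ^ 2
        = (∑ k, ((d k : ℝ)) ^ 2) - (1 / (N : ℝ)) * (∑ k, ((d k : ℝ))) ^ 2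
      ∧ (∑ k, ((d k : ℝ)) ^ 2) - (1 / (N : ℝ)) * (∑ k, ((d k : ℝ))) ^ 2
        = (N : ℝ) * spatialVar (Finset.univ.image d) :=
  steering_vector_fisher_information_general N d hd ω a adot ha hadot
end
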